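/- arXiv:1108.5854 — 5 statements merged into one kernel-verified Lean document; each statement's English description precedes it below -/
import Mathlib

section
/- On ℝ⁶ with coordinates (x, y, u, p, q, λ), define the vector fields D_x = ∂_x + p∂_u + λ∂_p + (λ²/2)∂_q and D_y = ∂_y + q∂_u + (λ²/2)∂_p + (λ³/3)∂_q. Then [D_y, D_x] = 0, and the field ξ = D_y − λ·D_x satisfies [∂_λ, ξ] = −D_x. Consequently ξ is a Cauchy characteristic of the rank-3 distribution spanned by D_x, D_y, ∂_λ. -/
/-! With ξ = D_y − λ D_x, the Leibniz rule gives
[Z, ξ] = [Z, D_y] − Z(λ) D_x − λ [Z, D_x] for every vector field Z. Since D_x and D_y commute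
and annihilate λ, this vanishes for Z = D_x and Z = D_y. For Z = ∂_λ the λ-derivatives of the
coefficients satisfy [∂_λ, D_y] = λ [∂_λ, D_x] and cancel, leaving [∂_λ, ξ] = −D_x. -/

/-- Lie bracket of vector fields on ℝⁿ. -/
noncomputable def lie {n : ℕ} (X Y : (Fin n → ℝ) → (Fin n → ℝ)) :
    (Fin n → ℝ) → (Fin n → ℝ) :=
  fun p => fderiv ℝ Y p (X p) - fderiv ℝ X p (Y p)

/-- Coordinates on ℝ⁶: (x, y, u, p, q, λ) = (P 0, ..., P 5). -/
noncomputable def Dx : (Fin 6 → ℝ) → (Fin 6 → ℝ) :=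
  fun P => ![1, 0, P 3, P 5, (P 5) ^ 2 / 2, 0]

noncomputable def Dy : (Fin 6 → ℝ) → (Fin 6 → ℝ) :=
  fun P => ![0, 1, P 4, (P 5) ^ 2 / 2, (P 5) ^ 3 / 3, 0]

noncomputable def dLam : (Fin 6 → ℝ) → (Fin 6 → ℝ) :=
  fun _ => ![0, 0, 0, 0, 0, 1]

noncomputable def xiC : (Fin 6 → ℝ) → (Fin 6 → ℝ) :=
  fun P => Dy P - P 5 • Dx P

open ContinuousLinearMap VectorField

theorem VectorField.lieBracket_sub_smul_right {𝕜 E : Type*} [NontriviallyNormedField 𝕜]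
    [NormedAddCommGroup E] [NormedSpace 𝕜 E] {V W X : E → E} {f : E → 𝕜} {x : E}
    (hf : DifferentiableAt 𝕜 f x) (hW : DifferentiableAt 𝕜 W x) (hX : DifferentiableAt 𝕜 X x) :
    lieBracket 𝕜 V (fun y ↦ W y - f y • X y) x =
      lieBracket 𝕜 V W x - (fderiv 𝕜 f x (V x) • X x + f x • lieBracket 𝕜 V X x) := by
  rw [← lieBracket_smul_right hf hX]
  simp only [lieBracket, fderiv_fun_sub hW (hf.fun_smul hX), sub_apply, map_sub]
  abel

theorem hasFDerivAt_apply_pow_div {ι : Type*} [Fintype ι] (i : ι) {n : ℕ} (hn : n ≠ 0)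
    (P : ι → ℝ) :
    HasFDerivAt (fun Q : ι → ℝ ↦ Q i ^ n / n) (P i ^ (n - 1) • proj (R := ℝ) i) P := by
  have h := ((hasFDerivAt_apply (𝕜 := ℝ) (F' := fun _ ↦ ℝ) i P).pow n).mul_const (n : ℝ)⁻¹
  simp only [← div_eq_mul_inv] at h
  refine h.congr_fderiv ?_
  ext v
  simp only [nsmul_eq_mul, smul_apply, proj_apply, smul_eq_mul]
  field_simp

theorem hasFDerivAt_Dx (P : Fin 6 → ℝ) :
    HasFDerivAt (𝕜 := ℝ) Dx (pi ![0, 0, proj 3, proj 5, P 5 • proj 5, 0]) P := by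
  refine hasFDerivAt_pi.2 fun i ↦ ?_
  fin_cases i
  exacts [hasFDerivAt_const _ _, hasFDerivAt_const _ _, hasFDerivAt_apply _ _,
    hasFDerivAt_apply _ _, by simpa [Dx] using hasFDerivAt_apply_pow_div 5 two_ne_zero P,
    hasFDerivAt_const _ _]

theorem hasFDerivAt_Dy (P : Fin 6 → ℝ) :
    HasFDerivAt (𝕜 := ℝ) Dy (pi ![0, 0, proj 4, P 5 • proj 5, P 5 ^ 2 • proj 5, 0]) P := by
  refine hasFDerivAt_pi.2 fun i ↦ ?_
  fin_cases i
  exacts [hasFDerivAt_const _ _, hasFDerivAt_const _ _, hasFDerivAt_apply _ _,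
    by simpa [Dy] using hasFDerivAt_apply_pow_div 5 two_ne_zero P,
    by simpa [Dy] using hasFDerivAt_apply_pow_div 5 three_ne_zero P, hasFDerivAt_const _ _]

theorem lie_eq_lieBracket {n : ℕ} : @lie n = lieBracket ℝ := rfl

theorem lieBracket_Dy_Dx (P : Fin 6 → ℝ) : lieBracket ℝ Dy Dx P = 0 := by
  rw [lieBracket, (hasFDerivAt_Dx P).fderiv, (hasFDerivAt_Dy P).fderiv]
  ext i
  fin_cases i <;> simp [Dx, Dy]

theorem lieBracket_dLam_Dy (P : Fin 6 → ℝ) :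
    lieBracket ℝ dLam Dy P = P 5 • lieBracket ℝ dLam Dx P := by
  rw [lieBracket, lieBracket, (hasFDerivAt_Dx P).fderiv, (hasFDerivAt_Dy P).fderiv,
    show fderiv ℝ dLam P = 0 from fderiv_const_apply _]
  ext i
  fin_cases i <;> simp [dLam, sq]

theorem lieBracket_xiC (Z : (Fin 6 → ℝ) → Fin 6 → ℝ) (P : Fin 6 → ℝ) :
    lieBracket ℝ Z xiC P = lieBracket ℝ Z Dy P - (Z P 5 • Dx P + P 5 • lieBracket ℝ Z Dx P) := by
  have h := lieBracket_sub_smul_right (V := Z) (differentiableAt_apply (𝕜 := ℝ) 5 P)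
    (hasFDerivAt_Dy P).differentiableAt (hasFDerivAt_Dx P).differentiableAt
  rwa [(hasFDerivAt_apply 5 P).fderiv, proj_apply] at h

theorem lieBracket_dLam_xiC (P : Fin 6 → ℝ) : lieBracket ℝ dLam xiC P = -Dx P := by
  rw [lieBracket_xiC, lieBracket_dLam_Dy]
  simp [dLam]

theorem lieBracket_xiC_Dx (P : Fin 6 → ℝ) : lieBracket ℝ xiC Dx P = 0 := by
  rw [lieBracket_swap, lieBracket_xiC, lieBracket_swap, lieBracket_Dy_Dx]
  simp [Dx]

theorem lieBracket_xiC_Dy (P : Fin 6 → ℝ) : lieBracket ℝ xiC Dy P = 0 := by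
  rw [lieBracket_swap, lieBracket_xiC, lieBracket_Dy_Dx]
  simp [Dy]

theorem lieBracket_xiC_dLam (P : Fin 6 → ℝ) : lieBracket ℝ xiC dLam P = Dx P := by
  rw [lieBracket_swap, lieBracket_dLam_xiC, neg_neg]

/-- On ℝ⁶(x,y,u,p,q,λ) with D_x = ∂_x + p∂_u + λ∂_p + (λ²/2)∂_q and
D_y = ∂_y + q∂_u + (λ²/2)∂_p + (λ³/3)∂_q one has [D_y, D_x] = 0 and
[∂_λ, ξ] = −D_x for ξ = D_y − λ·D_x; consequently ξ is a Cauchy characteristic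
of the rank-3 distribution spanned by D_x, D_y, ∂_λ. -/
theorem cauchy_characteristic_cartan_model :
    (∀ P, lie Dy Dx P = 0) ∧
    (∀ P, lie dLam xiC P = -(Dx P)) ∧
    (∀ P, ∀ Z ∈ ({Dx, Dy, dLam} : Set ((Fin 6 → ℝ) → (Fin 6 → ℝ))),
      lie xiC Z P ∈ Submodule.span ℝ {Dx P, Dy P, dLam P}) := by
  simp only [lie_eq_lieBracket]
  refine ⟨lieBracket_Dy_Dx, lieBracket_dLam_xiC, fun P Z hZ ↦ ?_⟩
  rcases hZ with rfl | rfl | rfl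
  · rw [lieBracket_xiC_Dx]; exact zero_mem _
  · rw [lieBracket_xiC_Dy]; exact zero_mem _
  · rw [lieBracket_xiC_dLam]; exact Submodule.subset_span (by simp)
end

section
/- Let p, q : U → ℝ be C² functions on an open set U ⊆ {(x,y) : x + y > 0} satisfying p_y = q/(x+y) and q_x = p/(x+y). Then the function L = q_y + q/(x+y) satisfies ∂_x L = 0 on U; i.e., L is an intermediate integral (first integral in x) of the system. -/
noncomputable def pdx (f : ℝ × ℝ → ℝ) (z : ℝ × ℝ) : ℝ := deriv (fun t => f (t, z.2)) z.1

noncomputable def pdy (f : ℝ × ℝ → ℝ) (z : ℝ × ℝ) : ℝ := deriv (fun t => f (z.1, t)) z.2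

/-! By symmetry of second derivatives, `∂ₓ q_y = ∂_y q_x = ∂_y (p / (x + y)) = (q - p) / (x + y)²`,
using `p_y = q / (x + y)`, while `∂ₓ (q / (x + y)) = (p - q) / (x + y)²` by `q_x = p / (x + y)`.
The two cancel. -/

open Filter Topology

section PartialDerivatives

variable {f g : ℝ × ℝ → ℝ} {z : ℝ × ℝ}

lemma hasDerivAt_slice_fst (hf : DifferentiableAt ℝ f z) :
    HasDerivAt (fun t => f (t, z.2)) (fderiv ℝ f z (1, 0)) z.1 :=
  hf.hasFDerivAt.comp_hasDerivAt z.1 ((hasDerivAt_id z.1).prodMk (hasDerivAt_const z.1 z.2))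

lemma hasDerivAt_slice_snd (hf : DifferentiableAt ℝ f z) :
    HasDerivAt (fun t => f (z.1, t)) (fderiv ℝ f z (0, 1)) z.2 :=
  hf.hasFDerivAt.comp_hasDerivAt z.2 ((hasDerivAt_const z.2 z.1).prodMk (hasDerivAt_id z.2))

lemma pdx_eq_fderiv (hf : DifferentiableAt ℝ f z) : pdx f z = fderiv ℝ f z (1, 0) :=
  (hasDerivAt_slice_fst hf).deriv

lemma pdy_eq_fderiv (hf : DifferentiableAt ℝ f z) : pdy f z = fderiv ℝ f z (0, 1) :=
  (hasDerivAt_slice_snd hf).deriv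

lemma pdx_congr (h : f =ᶠ[𝓝 z] g) : pdx f z = pdx g z :=
  (h.comp_tendsto ((continuous_id.prodMk continuous_const).tendsto' z.1 z rfl)).deriv_eq

lemma pdy_congr (h : f =ᶠ[𝓝 z] g) : pdy f z = pdy g z :=
  (h.comp_tendsto ((continuous_const.prodMk continuous_id).tendsto' z.2 z rfl)).deriv_eq

lemma pdx_add (hf : DifferentiableAt ℝ f z) (hg : DifferentiableAt ℝ g z) :
    pdx (fun w => f w + g w) z = pdx f z + pdx g z :=
  ((hasDerivAt_slice_fst hf).add (hasDerivAt_slice_fst hg)).deriv.trans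
    (by rw [pdx_eq_fderiv hf, pdx_eq_fderiv hg])

lemma pdx_div_coord_sum (hf : DifferentiableAt ℝ f z) (hz : z.1 + z.2 ≠ 0) :
    pdx (fun w => f w / (w.1 + w.2)) z = (pdx f z * (z.1 + z.2) - f z) / (z.1 + z.2) ^ 2 := by
  have hden : HasDerivAt (fun t : ℝ => t + z.2) 1 z.1 := (hasDerivAt_id z.1).add_const z.2
  rw [pdx_eq_fderiv hf, ← mul_one (f z)]
  exact ((hasDerivAt_slice_fst hf).div hden hz).deriv

lemma pdy_div_coord_sum (hf : DifferentiableAt ℝ f z) (hz : z.1 + z.2 ≠ 0) :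
    pdy (fun w => f w / (w.1 + w.2)) z = (pdy f z * (z.1 + z.2) - f z) / (z.1 + z.2) ^ 2 := by
  have hden : HasDerivAt (fun t : ℝ => z.1 + t) 1 z.2 := (hasDerivAt_id z.2).const_add z.1
  rw [pdy_eq_fderiv hf, ← mul_one (f z)]
  exact ((hasDerivAt_slice_snd hf).div hden hz).deriv

lemma pdx_eventuallyEq_fderiv (hf : ContDiffAt ℝ 2 f z) :
    pdx f =ᶠ[𝓝 z] fun w => fderiv ℝ f w (1, 0) :=
  hf.eventually (by simp) |>.mono fun _ hw => pdx_eq_fderiv (hw.differentiableAt two_ne_zero)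

lemma pdy_eventuallyEq_fderiv (hf : ContDiffAt ℝ 2 f z) :
    pdy f =ᶠ[𝓝 z] fun w => fderiv ℝ f w (0, 1) :=
  hf.eventually (by simp) |>.mono fun _ hw => pdy_eq_fderiv (hw.differentiableAt two_ne_zero)

lemma differentiableAt_fderiv_apply (hf : ContDiffAt ℝ 2 f z) (v : ℝ × ℝ) :
    DifferentiableAt ℝ (fun w => fderiv ℝ f w v) z :=
  ((hf.fderiv_right (m := 1) (by norm_num)).differentiableAt one_ne_zero).clm_apply
    (differentiableAt_const v)

lemma differentiableAt_pdy (hf : ContDiffAt ℝ 2 f z) : DifferentiableAt ℝ (pdy f) z :=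
  (differentiableAt_fderiv_apply hf (0, 1)).congr_of_eventuallyEq (pdy_eventuallyEq_fderiv hf)

lemma fderiv_fderiv_apply (hf : ContDiffAt ℝ 2 f z) (v w : ℝ × ℝ) :
    fderiv ℝ (fun x => fderiv ℝ f x w) z v = fderiv ℝ (fderiv ℝ f) z v w := by
  rw [fderiv_clm_apply ((hf.fderiv_right (m := 1) (by norm_num)).differentiableAt one_ne_zero)
    (differentiableAt_const w)]
  simp

lemma pdx_pdy_comm (hf : ContDiffAt ℝ 2 f z) : pdx (pdy f) z = pdy (pdx f) z := by
  rw [pdx_congr (pdy_eventuallyEq_fderiv hf), pdy_congr (pdx_eventuallyEq_fderiv hf),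
    pdx_eq_fderiv (differentiableAt_fderiv_apply hf _),
    pdy_eq_fderiv (differentiableAt_fderiv_apply hf _),
    fderiv_fderiv_apply hf, fderiv_fderiv_apply hf]
  exact hf.isSymmSndFDerivAt (by simp) _ _

end PartialDerivatives

/-- For C² solutions of p_y = q/(x+y), q_x = p/(x+y) on U ⊆ {x+y>0},
the function L = q_y + q/(x+y) satisfies ∂_x L = 0 on U: it is an
intermediate integral of the system. -/
theorem intermediate_integral_n1
    (U : Set (ℝ × ℝ)) (hU : IsOpen U) (hU' : ∀ z ∈ U, 0 < z.1 + z.2)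
    (p q : ℝ × ℝ → ℝ)
    (hp : ContDiffOn ℝ 2 p U) (hq : ContDiffOn ℝ 2 q U)
    (hpy : ∀ z ∈ U, pdy p z = q z / (z.1 + z.2))
    (hqx : ∀ z ∈ U, pdx q z = p z / (z.1 + z.2)) :
    ∀ z ∈ U, pdx (fun w => pdy q w + q w / (w.1 + w.2)) z = 0 := by
  intro z hz
  have hs : z.1 + z.2 ≠ 0 := (hU' z hz).ne'
  have hpd : DifferentiableAt ℝ p z :=
    (hp.contDiffAt (hU.mem_nhds hz)).differentiableAt two_ne_zero
  have hq2 : ContDiffAt ℝ 2 q z := hq.contDiffAt (hU.mem_nhds hz)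
  have hqd : DifferentiableAt ℝ q z := hq2.differentiableAt two_ne_zero
  have hqxy : pdy (pdx q) z = (q z - p z) / (z.1 + z.2) ^ 2 := by
    rw [pdy_congr (eventually_of_mem (hU.mem_nhds hz) hqx),
      pdy_div_coord_sum hpd hs, hpy z hz]
    field_simp
  have hqs : DifferentiableAt ℝ (fun w => q w / (w.1 + w.2)) z := by fun_prop (disch := exact hs)
  rw [pdx_add (differentiableAt_pdy hq2) hqs, pdx_pdy_comm hq2,
    pdx_div_coord_sum hqd hs, hqxy, hqx z hz]
  field_simp
  ring
end

section
/- Let ψ, f : ℝ → ℝ be continuous and set g(z) = z² + ψ(z) + f(z)². Suppose g > 0 on an interval K, let F be an antiderivative of 1/g on K, and let z = F⁻¹ ∘ (id + c) on a suitable interval (where F⁻¹ is the inverse of the strictly increasing function F and c ∈ ℝ). Then z is C¹ and satisfies the autonomous ODE z'(x) = g(z(x)). If moreover y is a C² solution of y'' + y = f(z(x)), then the pair (y, z) satisfies z' = z² + ψ(z) + (y'' + y)². -/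
/-- Quadrature solution of the symmetry-reduced Monge equation: if g = z²+ψ(z)+f(z)²
is positive on K, F is an antiderivative of 1/g on K, and z satisfies F(z(x)) = x + c
(i.e. z = F⁻¹∘(id+c)), then z is C¹ with z' = g(z); if moreover y'' + y = f(z(x)),
then (y,z) solves z' = z² + ψ(z) + (y''+y)². -/
theorem monge_quadrature (ψ f : ℝ → ℝ) (hψ : Continuous ψ) (hf : Continuous f)
    (K : Set ℝ) (hK : IsOpen K) (hKconn : K.OrdConnected)
    (hg : ∀ t ∈ K, 0 < t ^ 2 + ψ t + (f t) ^ 2)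
    (F : ℝ → ℝ)
    (hF : ∀ t ∈ K, HasDerivAt F (1 / (t ^ 2 + ψ t + (f t) ^ 2)) t)
    (c : ℝ) (I : Set ℝ) (hI : IsOpen I)
    (z : ℝ → ℝ) (hzc : ContinuousOn z I)
    (hzK : ∀ x ∈ I, z x ∈ K)
    (hinv : ∀ x ∈ I, F (z x) = x + c) :
    (ContDiffOn ℝ 1 z I ∧
      ∀ x ∈ I, deriv z x = (z x) ^ 2 + ψ (z x) + (f (z x)) ^ 2) ∧
    (∀ y : ℝ → ℝ, ContDiffOn ℝ 2 y I →
      (∀ x ∈ I, deriv (deriv y) x + y x = f (z x)) →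
      ∀ x ∈ I, deriv z x = (z x) ^ 2 + ψ (z x) + (deriv (deriv y) x + y x) ^ 2) := by
  have hzd : ∀ x ∈ I, HasDerivAt z ((z x) ^ 2 + ψ (z x) + (f (z x)) ^ 2) x := by
    intro x hx
    have hzx : z x ∈ K := hzK x hx
    have hgpos := hg (z x) hzx
    have hFb : HasDerivAt (fun t => F t - c)
        (1 / ((z x) ^ 2 + ψ (z x) + (f (z x)) ^ 2)) (z x) :=
      (hF (z x) hzx).sub_const c
    have hfg : ∀ᶠ x' in nhds x, (fun t => F t - c) (z x') = x' := by
      filter_upwards [hI.mem_nhds hx] with x' hx'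
      simp [hinv x' hx']
    have := HasDerivAt.of_local_left_inverse (hzc.continuousAt (hI.mem_nhds hx))
      hFb (by positivity) hfg
    simpa using this
  have hderiv : ∀ x ∈ I, deriv z x = (z x) ^ 2 + ψ (z x) + (f (z x)) ^ 2 :=
    fun x hx => (hzd x hx).deriv
  have hc1 : ContDiffOn ℝ 1 z I := by
    rw [show (1 : WithTop ℕ∞) = 0 + 1 from rfl, contDiffOn_succ_iff_deriv_of_isOpen hI]
    refine ⟨fun x hx => ((hzd x hx).differentiableAt).differentiableWithinAt,
      by simp, ?_⟩
    rw [contDiffOn_zero]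
    have : ContinuousOn (fun x => (z x) ^ 2 + ψ (z x) + (f (z x)) ^ 2) I :=
      ((hzc.pow 2).add (hψ.comp_continuousOn hzc)).add
        ((hf.comp_continuousOn hzc).pow 2)
    exact this.congr hderiv
  refine ⟨⟨hc1, hderiv⟩, ?_⟩
  intro y hy hyy x hx
  rw [hyy x hx]
  exact hderiv x hx
end

section
/- On ℝ⁴ with coordinates (x, y, y₁, y₂) let ξ₁ = ∂_x + y₁∂_y + y₂∂_{y₁} and ξ₂ = ∂_{y₂} (the Engel distribution on J²(ℝ,ℝ)). Let λ₂ : ℝ⁴ → ℝ be a C² function with ∂_{y₂}λ₂ = 0, and set η = ∂_y + λ₂∂_{y₁} + (ξ₁(λ₂) + λ₂²)∂_{y₂}. Then [ξ₂, η] = (∂_{y₁}λ₂)·ξ₂ and [ξ₁, η] + λ₂·η ∈ span{ξ₂} pointwise; in particular [ξᵢ, η] ∈ span{ξ₁, ξ₂, η} for i = 1, 2, i.e., η is a generalized symmetry of the Engel distribution. -/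
/-- Coordinates (x, y, y₁, y₂) on ℝ⁴ = J²(ℝ,ℝ); the Engel distribution ⟨ξ₁, ξ₂⟩. -/
noncomputable def xi1 : (Fin 4 → ℝ) → (Fin 4 → ℝ) := fun p => ![1, p 2, p 3, 0]

noncomputable def xi2 : (Fin 4 → ℝ) → (Fin 4 → ℝ) := fun _ => ![0, 0, 0, 1]

/-!
The brackets are computed componentwise. For `[ξ₁, η] + λ₂ η` the first three components cancel
because the `∂_{y₂}`-coefficient of `η` is exactly `ξ₁(λ₂) + λ₂²`. For `[ξ₂, η] = ∂_{y₂} η` the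
only nontrivial entry is `∂_{y₂}(ξ₁(λ₂)) = ξ₁(∂_{y₂}λ₂) + [∂_{y₂}, ξ₁](λ₂) = 0 + ∂_{y₁}λ₂`, where
commuting `∂_{y₂}` past `ξ₁` is the symmetry of the second derivative of `λ₂`.
-/

section

variable {E F : Type*} [NormedAddCommGroup E] [NormedSpace ℝ E]
  [NormedAddCommGroup F] [NormedSpace ℝ F]

theorem fderiv_vecCons_four_apply {f₀ f₁ f₂ f₃ : E → ℝ} {p : E}
    (h₀ : DifferentiableAt ℝ f₀ p) (h₁ : DifferentiableAt ℝ f₁ p)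
    (h₂ : DifferentiableAt ℝ f₂ p) (h₃ : DifferentiableAt ℝ f₃ p) (v : E) :
    fderiv ℝ (fun q => ![f₀ q, f₁ q, f₂ q, f₃ q]) p v =
      ![fderiv ℝ f₀ p v, fderiv ℝ f₁ p v, fderiv ℝ f₂ p v, fderiv ℝ f₃ p v] := by
  have hsplit : (fun q => ![f₀ q, f₁ q, f₂ q, f₃ q]) = fun q i => ![f₀, f₁, f₂, f₃] i q := by
    funext q i; fin_cases i <;> rfl
  rw [hsplit, fderiv_pi fun i => by fin_cases i <;> assumption]
  funext i; fin_cases i <;> rfl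

theorem ContDiff.differentiable_fderiv {u : E → F} (hu : ContDiff ℝ 2 u) :
    Differentiable ℝ (fderiv ℝ u) :=
  (hu.fderiv_right (m := 1) le_rfl).differentiable one_ne_zero

/-- Symmetry of the second derivative moves the derivative along `w` onto `u`, where it vanishes. -/
theorem fderiv_fderiv_apply_of_fderiv_apply_eq_zero {u : E → F} {X : E → E} {p w : E}
    (hu : ContDiff ℝ 2 u) (hX : DifferentiableAt ℝ X p) (hw : ∀ q, fderiv ℝ u q w = 0) :
    fderiv ℝ (fun q => fderiv ℝ u q (X q)) p w = fderiv ℝ u p (fderiv ℝ X p w) := by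
  have hu' := hu.differentiable_fderiv
  have hconst : fderiv ℝ (fun q => fderiv ℝ u q w) p = 0 := by
    simp only [hw]
    exact fderiv_const_apply 0
  rw [fderiv_clm_apply (hu' p) (differentiableAt_const w)] at hconst
  have hsnd : fderiv ℝ (fderiv ℝ u) p w (X p) = 0 := by
    rw [hu.contDiffAt.isSymmSndFDerivAt (by simp)]
    simpa using congr($hconst (X p))
  simp [fderiv_clm_apply (hu' p) hX, hsnd]

end

theorem fderiv_xi1_apply (p v : Fin 4 → ℝ) : fderiv ℝ xi1 p v = ![0, v 2, v 3, 0] := by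
  unfold xi1
  rw [fderiv_vecCons_four_apply (differentiableAt_const _) (differentiableAt_apply _ _)
    (differentiableAt_apply _ _) (differentiableAt_const _)]
  simp [(hasFDerivAt_apply 2 p).fderiv, (hasFDerivAt_apply 3 p).fderiv]

theorem differentiable_xi1 : Differentiable ℝ xi1 :=
  differentiable_pi.2 fun i => by fin_cases i <;> simp [xi1] <;> fun_prop

noncomputable def etaCoeff (l : (Fin 4 → ℝ) → ℝ) (q : Fin 4 → ℝ) : ℝ :=
  fderiv ℝ l q (xi1 q) + l q ^ 2

noncomputable def eta (l : (Fin 4 → ℝ) → ℝ) : (Fin 4 → ℝ) → (Fin 4 → ℝ) :=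
  fun q => ![0, 1, l q, etaCoeff l q]

section

variable {l : (Fin 4 → ℝ) → ℝ}

theorem differentiable_etaCoeff (hl : ContDiff ℝ 2 l) : Differentiable ℝ (etaCoeff l) :=
  (hl.differentiable_fderiv.clm_apply differentiable_xi1).add
    ((hl.differentiable two_ne_zero).pow 2)

theorem fderiv_etaCoeff_apply_e₃ (hl : ContDiff ℝ 2 l)
    (hy₂ : ∀ p, fderiv ℝ l p ![0, 0, 0, 1] = 0) (p : Fin 4 → ℝ) :
    fderiv ℝ (etaCoeff l) p ![0, 0, 0, 1] = fderiv ℝ l p ![0, 0, 1, 0] := by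
  have hd := hl.differentiable two_ne_zero
  unfold etaCoeff
  rw [fderiv_fun_add ((hl.differentiable_fderiv.clm_apply differentiable_xi1) p)
    (g := fun q => l q ^ 2) ((hd p).pow 2)]
  simp [fderiv_fderiv_apply_of_fderiv_apply_eq_zero hl (differentiable_xi1 p) hy₂,
    fderiv_xi1_apply, ((hd p).hasFDerivAt.pow 2).fderiv, hy₂]

theorem fderiv_eta_apply (hl : ContDiff ℝ 2 l) (p v : Fin 4 → ℝ) :
    fderiv ℝ (eta l) p v = ![0, 0, fderiv ℝ l p v, fderiv ℝ (etaCoeff l) p v] := by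
  unfold eta
  rw [fderiv_vecCons_four_apply (differentiableAt_const _) (differentiableAt_const _)
    (hl.differentiable two_ne_zero p) (differentiable_etaCoeff hl p)]
  simp

theorem lie_xi2_eta (hl : ContDiff ℝ 2 l) (hy₂ : ∀ p, fderiv ℝ l p ![0, 0, 0, 1] = 0)
    (p : Fin 4 → ℝ) : lie xi2 (eta l) p = fderiv ℝ l p ![0, 0, 1, 0] • xi2 p := by
  have hxi2 : fderiv ℝ xi2 p = 0 := fderiv_const_apply _
  simp only [lie, hxi2, fderiv_eta_apply hl]
  funext i
  fin_cases i <;> simp [xi2, hy₂, fderiv_etaCoeff_apply_e₃ hl hy₂]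

theorem lie_xi1_eta_add_smul_eta (hl : ContDiff ℝ 2 l) (p : Fin 4 → ℝ) :
    lie xi1 (eta l) p + l p • eta l p =
      (fderiv ℝ (etaCoeff l) p (xi1 p) + l p * etaCoeff l p) • xi2 p := by
  simp only [lie, fderiv_eta_apply hl, fderiv_xi1_apply]
  funext i
  fin_cases i <;> simp [xi2, eta, etaCoeff]
  ring

end

/-- Generalized symmetries of the Engel distribution, case λ₁ = 0: for C² λ₂ with
∂_{y₂}λ₂ = 0 and η = ∂_y + λ₂∂_{y₁} + (ξ₁(λ₂)+λ₂²)∂_{y₂} one has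
[ξ₂,η] = (∂_{y₁}λ₂)·ξ₂ and [ξ₁,η] + λ₂·η ∈ ⟨ξ₂⟩ pointwise; in particular
[ξᵢ,η] ∈ ⟨ξ₁,ξ₂,η⟩, i.e. η is a generalized symmetry. -/
theorem engel_generalized_symmetry (l2 : (Fin 4 → ℝ) → ℝ) (hl2 : ContDiff ℝ 2 l2)
    (hy2 : ∀ p, fderiv ℝ l2 p ![0, 0, 0, 1] = 0) :
    (∀ p, lie xi2 (fun q => ![0, 1, l2 q, fderiv ℝ l2 q (xi1 q) + (l2 q) ^ 2]) p
        = (fderiv ℝ l2 p ![0, 0, 1, 0]) • xi2 p) ∧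
    (∀ p, lie xi1 (fun q => ![0, 1, l2 q, fderiv ℝ l2 q (xi1 q) + (l2 q) ^ 2]) p
        + l2 p • (![0, 1, l2 p, fderiv ℝ l2 p (xi1 p) + (l2 p) ^ 2] : Fin 4 → ℝ)
      ∈ Submodule.span ℝ {xi2 p}) ∧
    (∀ p, lie xi1 (fun q => ![0, 1, l2 q, fderiv ℝ l2 q (xi1 q) + (l2 q) ^ 2]) p
        ∈ Submodule.span ℝ
          {xi1 p, xi2 p, (![0, 1, l2 p, fderiv ℝ l2 p (xi1 p) + (l2 p) ^ 2] : Fin 4 → ℝ)} ∧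
      lie xi2 (fun q => ![0, 1, l2 q, fderiv ℝ l2 q (xi1 q) + (l2 q) ^ 2]) p
        ∈ Submodule.span ℝ
          {xi1 p, xi2 p, (![0, 1, l2 p, fderiv ℝ l2 p (xi1 p) + (l2 p) ^ 2] : Fin 4 → ℝ)}) := by
  have hbracket₂ := lie_xi2_eta hl2 hy2
  have hbracket₁ (p) : lie xi1 (eta l2) p + l2 p • eta l2 p ∈ Submodule.span ℝ {xi2 p} := by
    rw [lie_xi1_eta_add_smul_eta hl2 p]
    exact Submodule.smul_mem _ _ (Submodule.mem_span_singleton_self _)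
  refine ⟨hbracket₂, hbracket₁, fun p => ?_⟩
  set D := Submodule.span ℝ {xi1 p, xi2 p, eta l2 p}
  have hxi2 : xi2 p ∈ D := Submodule.subset_span (by simp)
  have heta : eta l2 p ∈ D := Submodule.subset_span (by simp)
  have hspan : Submodule.span ℝ {xi2 p} ≤ D := (Submodule.span_singleton_le_iff_mem _ _).2 hxi2
  have h₁ : lie xi1 (eta l2) p ∈ D := by
    simpa using D.sub_mem (hspan (hbracket₁ p)) (D.smul_mem (l2 p) heta)
  have h₂ : lie xi2 (eta l2) p ∈ D := by
    rw [hbracket₂ p]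
    exact D.smul_mem _ hxi2
  exact ⟨h₁, h₂⟩
end

section
/- Consider the 8-dimensional real vector space with basis e₁, e₁', e₂, e₃, e₃', e₄, e₄', e₄'' and the bracket defined on basis elements by: [e₁,e₁'] = e₂, [e₁,e₂] = e₃, [e₁',e₂] = e₃', [e₁,e₃] = e₄, [e₁,e₃'] = [e₁',e₃] = e₄', [e₁',e₃'] = e₄'', with all other brackets of basis elements equal to zero (extended antisymmetrically). Then this bracket satisfies the Jacobi identity, making it a Lie algebra, and this Lie algebra is nilpotent of step 4 with lower central series of dimensions (8, 6, 5, 3, 0). -/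
/-- The bracket on ℝ⁸ with basis e₁,e₁',e₂,e₃,e₃',e₄,e₄',e₄'' (indices 0,…,7)
given by the structure relations [e₁,e₁']=e₂, [e₁,e₂]=e₃, [e₁',e₂]=e₃',
[e₁,e₃]=e₄, [e₁,e₃']=[e₁',e₃]=e₄', [e₁',e₃']=e₄'', all other brackets zero. -/
def carnotBr (v w : Fin 8 → ℝ) : Fin 8 → ℝ :=
  ![0, 0,
    v 0 * w 1 - v 1 * w 0,
    v 0 * w 2 - v 2 * w 0,
    v 1 * w 2 - v 2 * w 1,
    v 0 * w 3 - v 3 * w 0,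
    (v 0 * w 4 - v 4 * w 0) + (v 1 * w 3 - v 3 * w 1),
    v 1 * w 4 - v 4 * w 1]

/-- Lower central series of the bracket `carnotBr`. -/
def carnotLCS : ℕ → Submodule ℝ (Fin 8 → ℝ)
  | 0 => ⊤
  | k + 1 => Submodule.span ℝ {x | ∃ u : Fin 8 → ℝ, ∃ v ∈ carnotLCS k, x = carnotBr u v}

namespace CarnotAux

lemma br0 (v w : Fin 8 → ℝ) : carnotBr v w 0 = 0 := rfl
lemma br1 (v w : Fin 8 → ℝ) : carnotBr v w 1 = 0 := rfl
lemma br2 (v w : Fin 8 → ℝ) : carnotBr v w 2 = v 0 * w 1 - v 1 * w 0 := rfl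
lemma br3 (v w : Fin 8 → ℝ) : carnotBr v w 3 = v 0 * w 2 - v 2 * w 0 := rfl
lemma br4 (v w : Fin 8 → ℝ) : carnotBr v w 4 = v 1 * w 2 - v 2 * w 1 := rfl
lemma br5 (v w : Fin 8 → ℝ) : carnotBr v w 5 = v 0 * w 3 - v 3 * w 0 := rfl
lemma br6 (v w : Fin 8 → ℝ) :
    carnotBr v w 6 = (v 0 * w 4 - v 4 * w 0) + (v 1 * w 3 - v 3 * w 1) := rfl
lemma br7 (v w : Fin 8 → ℝ) : carnotBr v w 7 = v 1 * w 4 - v 4 * w 1 := rfl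

/-- standard basis vector -/
noncomputable def E (i : Fin 8) : Fin 8 → ℝ := Pi.single i 1

lemma sum_repr (x : Fin 8 → ℝ) : x = ∑ i, x i • E i := by
  have : ∑ i, x i • E i = ∑ i, Pi.single i (x i) := by
    refine Finset.sum_congr rfl fun i _ => ?_
    simp [E, ← Pi.single_smul]
  rw [this, Finset.univ_sum_single]

lemma bracket_compute :
    carnotBr (E 0) (E 1) = E 2 ∧ carnotBr (E 0) (E 2) = E 3 ∧
    carnotBr (E 1) (E 2) = E 4 ∧ carnotBr (E 0) (E 3) = E 5 ∧
    carnotBr (E 0) (E 4) = E 6 ∧ carnotBr (E 1) (E 4) = E 7 := by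
  refine ⟨?_, ?_, ?_, ?_, ?_, ?_⟩ <;> funext i <;> fin_cases i <;>
    simp [E, br0, br1, br2, br3, br4, br5, br6, br7, Pi.single_apply]

/-- index families for the spans of the lower central series terms -/
noncomputable def b1 : Fin 6 → (Fin 8 → ℝ) := fun j => E (![2,3,4,5,6,7] j)
noncomputable def b2 : Fin 5 → (Fin 8 → ℝ) := fun j => E (![3,4,5,6,7] j)
noncomputable def b3 : Fin 3 → (Fin 8 → ℝ) := fun j => E (![5,6,7] j)

lemma E_li : LinearIndependent ℝ E := by
  have := (Pi.basisFun ℝ (Fin 8)).linearIndependent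
  convert this using 1
  funext i; simp [E]

lemma b1_li : LinearIndependent ℝ b1 :=
  E_li.comp _ (by decide)
lemma b2_li : LinearIndependent ℝ b2 :=
  E_li.comp _ (by decide)
lemma b3_li : LinearIndependent ℝ b3 :=
  E_li.comp _ (by decide)

lemma mem_span_b1 (x : Fin 8 → ℝ) (h0 : x 0 = 0) (h1 : x 1 = 0) :
    x ∈ Submodule.span ℝ (Set.range b1) := by
  rw [sum_repr x, Fin.sum_univ_eight, h0, h1, zero_smul, zero_smul, zero_add, zero_add]
  refine Submodule.add_mem _ (Submodule.add_mem _ (Submodule.add_mem _ (Submodule.add_mem _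
    (Submodule.add_mem _
      (Submodule.smul_mem _ _ (Submodule.subset_span ⟨(0 : Fin 6), rfl⟩))
      (Submodule.smul_mem _ _ (Submodule.subset_span ⟨(1 : Fin 6), rfl⟩)))
    (Submodule.smul_mem _ _ (Submodule.subset_span ⟨(2 : Fin 6), rfl⟩)))
    (Submodule.smul_mem _ _ (Submodule.subset_span ⟨(3 : Fin 6), rfl⟩)))
    (Submodule.smul_mem _ _ (Submodule.subset_span ⟨(4 : Fin 6), rfl⟩)))
    (Submodule.smul_mem _ _ (Submodule.subset_span ⟨(5 : Fin 6), rfl⟩))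

lemma mem_span_b2 (x : Fin 8 → ℝ) (h0 : x 0 = 0) (h1 : x 1 = 0) (h2 : x 2 = 0) :
    x ∈ Submodule.span ℝ (Set.range b2) := by
  rw [sum_repr x, Fin.sum_univ_eight, h0, h1, h2, zero_smul, zero_smul, zero_smul,
    zero_add, zero_add, zero_add]
  refine Submodule.add_mem _ (Submodule.add_mem _ (Submodule.add_mem _ (Submodule.add_mem _
    (Submodule.smul_mem _ _ (Submodule.subset_span ⟨(0 : Fin 5), rfl⟩))
    (Submodule.smul_mem _ _ (Submodule.subset_span ⟨(1 : Fin 5), rfl⟩)))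
    (Submodule.smul_mem _ _ (Submodule.subset_span ⟨(2 : Fin 5), rfl⟩)))
    (Submodule.smul_mem _ _ (Submodule.subset_span ⟨(3 : Fin 5), rfl⟩)))
    (Submodule.smul_mem _ _ (Submodule.subset_span ⟨(4 : Fin 5), rfl⟩))

lemma mem_span_b3 (x : Fin 8 → ℝ) (h0 : x 0 = 0) (h1 : x 1 = 0) (h2 : x 2 = 0)
    (h3 : x 3 = 0) (h4 : x 4 = 0) :
    x ∈ Submodule.span ℝ (Set.range b3) := by
  rw [sum_repr x, Fin.sum_univ_eight, h0, h1, h2, h3, h4, zero_smul, zero_smul, zero_smul,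
    zero_smul, zero_smul, zero_add, zero_add, zero_add, zero_add, zero_add]
  exact Submodule.add_mem _ (Submodule.add_mem _
    (Submodule.smul_mem _ _ (Submodule.subset_span ⟨(0 : Fin 3), rfl⟩))
    (Submodule.smul_mem _ _ (Submodule.subset_span ⟨(1 : Fin 3), rfl⟩)))
    (Submodule.smul_mem _ _ (Submodule.subset_span ⟨(2 : Fin 3), rfl⟩))

/-- submodule of functions vanishing on a set of coordinates -/
def Kset (s : Set (Fin 8)) : Submodule ℝ (Fin 8 → ℝ) where
  carrier := {x | ∀ i ∈ s, x i = 0}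
  add_mem' := by intro a b ha hb i hi; simp [ha i hi, hb i hi]
  zero_mem' := by intro i hi; rfl
  smul_mem' := by intro c x hx i hi; simp [hx i hi]

lemma mem_Kset {s : Set (Fin 8)} {x : Fin 8 → ℝ} : x ∈ Kset s ↔ ∀ i ∈ s, x i = 0 := Iff.rfl

lemma span_b1_vanish (x : Fin 8 → ℝ) (hx : x ∈ Submodule.span ℝ (Set.range b1)) :
    x 0 = 0 ∧ x 1 = 0 := by
  have hle : Submodule.span ℝ (Set.range b1) ≤ Kset {0, 1} := by
    rw [Submodule.span_le]
    rintro _ ⟨j, rfl⟩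
    intro i hi
    fin_cases j <;> simp only [Set.mem_insert_iff, Set.mem_singleton_iff] at hi <;>
      rcases hi with h|h <;> subst h <;>
      simp [b1, E, Pi.single_apply] <;> decide
  have h := hle hx
  refine ⟨?_, ?_⟩
  · exact h 0 (by simp)
  · exact h 1 (by simp)

lemma span_b2_vanish (x : Fin 8 → ℝ) (hx : x ∈ Submodule.span ℝ (Set.range b2)) :
    x 0 = 0 ∧ x 1 = 0 ∧ x 2 = 0 := by
  have hle : Submodule.span ℝ (Set.range b2) ≤ Kset {0, 1, 2} := by
    rw [Submodule.span_le]
    rintro _ ⟨j, rfl⟩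
    intro i hi
    fin_cases j <;> simp only [Set.mem_insert_iff, Set.mem_singleton_iff] at hi <;>
      rcases hi with h|h|h <;> subst h <;>
      simp [b2, E, Pi.single_apply] <;> decide
  have h := hle hx
  refine ⟨?_, ?_, ?_⟩
  · exact h 0 (by simp)
  · exact h 1 (by simp)
  · exact h 2 (by simp)

lemma span_b3_vanish (x : Fin 8 → ℝ) (hx : x ∈ Submodule.span ℝ (Set.range b3)) :
    x 0 = 0 ∧ x 1 = 0 ∧ x 2 = 0 ∧ x 3 = 0 ∧ x 4 = 0 := by
  have hle : Submodule.span ℝ (Set.range b3) ≤ Kset {0, 1, 2, 3, 4} := by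
    rw [Submodule.span_le]
    rintro _ ⟨j, rfl⟩
    intro i hi
    fin_cases j <;> simp only [Set.mem_insert_iff, Set.mem_singleton_iff] at hi <;>
      rcases hi with h|h|h|h|h <;> subst h <;>
      simp [b3, E, Pi.single_apply] <;> decide
  have h := hle hx
  refine ⟨?_, ?_, ?_, ?_, ?_⟩
  · exact h 0 (by simp)
  · exact h 1 (by simp)
  · exact h 2 (by simp)
  · exact h 3 (by simp)
  · exact h 4 (by simp)

lemma lcs1_eq : carnotLCS 1 = Submodule.span ℝ (Set.range b1) := by
  obtain ⟨c2, c3, c4, c5, c6, c7⟩ := bracket_compute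
  apply le_antisymm
  · show Submodule.span ℝ _ ≤ _
    rw [Submodule.span_le]
    rintro _ ⟨u, v, -, rfl⟩
    exact mem_span_b1 _ (br0 u v) (br1 u v)
  · rw [Submodule.span_le]
    rintro _ ⟨j, rfl⟩
    have mem : ∀ u v : Fin 8 → ℝ, carnotBr u v ∈ carnotLCS 1 := fun u v =>
      Submodule.subset_span ⟨u, v, Submodule.mem_top, rfl⟩
    fin_cases j
    · have h' := mem (E 0) (E 1); rw [c2] at h'; exact h'
    · have h' := mem (E 0) (E 2); rw [c3] at h'; exact h'
    · have h' := mem (E 1) (E 2); rw [c4] at h'; exact h'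
    · have h' := mem (E 0) (E 3); rw [c5] at h'; exact h'
    · have h' := mem (E 0) (E 4); rw [c6] at h'; exact h'
    · have h' := mem (E 1) (E 4); rw [c7] at h'; exact h'

lemma lcs2_eq : carnotLCS 2 = Submodule.span ℝ (Set.range b2) := by
  obtain ⟨c2, c3, c4, c5, c6, c7⟩ := bracket_compute
  apply le_antisymm
  · show Submodule.span ℝ _ ≤ _
    rw [Submodule.span_le]
    rintro _ ⟨u, v, hv, rfl⟩
    rw [lcs1_eq] at hv
    obtain ⟨hv0, hv1⟩ := span_b1_vanish v hv
    refine mem_span_b2 _ (br0 u v) (br1 u v) ?_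
    rw [br2, hv0, hv1]; ring
  · rw [Submodule.span_le]
    rintro _ ⟨j, rfl⟩
    have mE : ∀ i : Fin 6, b1 i ∈ carnotLCS 1 := fun i => by
      rw [lcs1_eq]; exact Submodule.subset_span ⟨i, rfl⟩
    have he2 : E 2 ∈ carnotLCS 1 := mE 0
    have he3 : E 3 ∈ carnotLCS 1 := mE 1
    have he4 : E 4 ∈ carnotLCS 1 := mE 2
    have mem : ∀ u v : Fin 8 → ℝ, v ∈ carnotLCS 1 → carnotBr u v ∈ carnotLCS 2 :=
      fun u v hv => Submodule.subset_span ⟨u, v, hv, rfl⟩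
    fin_cases j
    · have h' := mem (E 0) (E 2) he2; rw [c3] at h'; exact h'
    · have h' := mem (E 1) (E 2) he2; rw [c4] at h'; exact h'
    · have h' := mem (E 0) (E 3) he3; rw [c5] at h'; exact h'
    · have h' := mem (E 0) (E 4) he4; rw [c6] at h'; exact h'
    · have h' := mem (E 1) (E 4) he4; rw [c7] at h'; exact h'

lemma lcs3_eq : carnotLCS 3 = Submodule.span ℝ (Set.range b3) := by
  obtain ⟨c2, c3, c4, c5, c6, c7⟩ := bracket_compute
  apply le_antisymm
  · show Submodule.span ℝ _ ≤ _
    rw [Submodule.span_le]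
    rintro _ ⟨u, v, hv, rfl⟩
    rw [lcs2_eq] at hv
    obtain ⟨hv0, hv1, hv2⟩ := span_b2_vanish v hv
    refine mem_span_b3 _ (br0 u v) (br1 u v) ?_ ?_ ?_
    · rw [br2, hv0, hv1]; ring
    · rw [br3, hv0, hv2]; ring
    · rw [br4, hv1, hv2]; ring
  · rw [Submodule.span_le]
    rintro _ ⟨j, rfl⟩
    have mE : ∀ i : Fin 5, b2 i ∈ carnotLCS 2 := fun i => by
      rw [lcs2_eq]; exact Submodule.subset_span ⟨i, rfl⟩
    have he3 : E 3 ∈ carnotLCS 2 := mE 0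
    have he4 : E 4 ∈ carnotLCS 2 := mE 1
    have mem : ∀ u v : Fin 8 → ℝ, v ∈ carnotLCS 2 → carnotBr u v ∈ carnotLCS 3 :=
      fun u v hv => Submodule.subset_span ⟨u, v, hv, rfl⟩
    fin_cases j
    · have h' := mem (E 0) (E 3) he3; rw [c5] at h'; exact h'
    · have h' := mem (E 0) (E 4) he4; rw [c6] at h'; exact h'
    · have h' := mem (E 1) (E 4) he4; rw [c7] at h'; exact h'

lemma lcs4_eq : carnotLCS 4 = ⊥ := by
  rw [eq_bot_iff]
  show Submodule.span ℝ _ ≤ _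
  rw [Submodule.span_le]
  rintro _ ⟨u, v, hv, rfl⟩
  rw [lcs3_eq] at hv
  obtain ⟨hv0, hv1, hv2, hv3, hv4⟩ := span_b3_vanish v hv
  have : carnotBr u v = 0 := by
    funext i; fin_cases i <;>
      simp [br0, br1, br2, br3, br4, br5, br6, br7, hv0, hv1, hv2, hv3, hv4]
  simp [this]

end CarnotAux

/-- The bracket is antisymmetric and satisfies the Jacobi identity, so it defines a
Lie algebra; this Lie algebra is nilpotent of step 4 with lower central series of
dimensions (8, 6, 5, 3, 0). -/
theorem carnot_algebra_2123 :
    (∀ v w, carnotBr v w = -carnotBr w v) ∧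
    (∀ u v w,
      carnotBr u (carnotBr v w) + carnotBr v (carnotBr w u)
        + carnotBr w (carnotBr u v) = 0) ∧
    Module.finrank ℝ (carnotLCS 0) = 8 ∧
    Module.finrank ℝ (carnotLCS 1) = 6 ∧
    Module.finrank ℝ (carnotLCS 2) = 5 ∧
    Module.finrank ℝ (carnotLCS 3) = 3 ∧
    carnotLCS 4 = ⊥ ∧ carnotLCS 3 ≠ ⊥ := by
  open CarnotAux in
  refine ⟨?_, ?_, ?_, ?_, ?_, ?_, lcs4_eq, ?_⟩
  · intro v w
    funext i; fin_cases i <;> simp [br0, br1, br2, br3, br4, br5, br6, br7] <;> ring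
  · intro u v w
    funext i; fin_cases i <;> simp [br0, br1, br2, br3, br4, br5, br6, br7] <;> ring
  · rw [show carnotLCS 0 = ⊤ from rfl, finrank_top]
    simp
  · rw [lcs1_eq, finrank_span_eq_card b1_li]
    simp
  · rw [lcs2_eq, finrank_span_eq_card b2_li]
    simp
  · rw [lcs3_eq, finrank_span_eq_card b3_li]
    simp
  · intro h
    have : E 5 ∈ carnotLCS 3 := by
      rw [lcs3_eq]; exact Submodule.subset_span ⟨0, rfl⟩
    rw [h, Submodule.mem_bot] at this
    have := congrFun this 5
    simp [E, Pi.single_apply] at this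
end
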